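/- Inverse-probability-weighting identification (Theorem 1, IPW part): under Assumptions SO, NA, and DDD-CPT, for every g ∈ 𝒢_trt, every t with g ≤ t ≤ T, and every g_c ∈ 𝒮 with g_c > t, ATT(g,t) = E[(w_trt − w_{g,0})·(Y_t − Y_{g−1})] − E[(w_{g_c,1} − w_{g_c,0})·(Y_t − Y_{g−1})]. -/

import Mathlib

open MeasureTheory ProbabilityTheory

namespace TripleDiff

/-- A staggered triple-differences (DDD) setup: a probability space carrying an
enabling-group variable `S` with values in a finite set `𝒮 ⊆ {2,…,T} ∪ {∞}`
(`∞` is coded as `⊤ : ℕ∞`), an eligibility indicator `Q ∈ {0,1}`, covariates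
`X ∈ ℝ^d`, and integrable potential outcomes `Y_t(g)`, with every cell
`{S = g, Q = q}` having positive probability. -/
structure Setup (Ω : Type*) [MeasurableSpace Ω] (d : ℕ) where
  /-- the underlying probability measure -/
  μ : Measure Ω
  isProb : IsProbabilityMeasure μ
  /-- the number of time periods -/
  T : ℕ
  hT : 2 ≤ T
  /-- the (finite) support of the enabling variable -/
  𝒮 : Finset ℕ∞
  h𝒮 : ∀ g ∈ 𝒮, g ≠ ⊤ → ∃ n : ℕ, 2 ≤ n ∧ n ≤ T ∧ g = (n : ℕ∞)
  htop : (⊤ : ℕ∞) ∈ 𝒮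
  /-- enabling group: first period at which treatment is enabled -/
  S : Ω → ℕ∞
  hS : Measurable S
  hSmem : ∀ ω, S ω ∈ 𝒮
  /-- eligibility indicator -/
  Q : Ω → ℕ
  hQ : Measurable Q
  hQval : ∀ ω, Q ω ≤ 1
  /-- covariates -/
  X : Ω → Fin d → ℝ
  hX : Measurable X
  /-- potential outcomes `Y_t(g)` -/
  Ypo : ℕ∞ → ℕ → Ω → ℝ
  hYpo : ∀ g ∈ 𝒮, ∀ t : ℕ, 1 ≤ t → t ≤ T → Integrable (Ypo g t) μ
  hcells : ∀ g ∈ 𝒮, ∀ q ≤ 1, 0 < μ {ω | S ω = g ∧ Q ω = q}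

namespace Setup

variable {Ω : Type*} [MeasurableSpace Ω] {d : ℕ} (E : Setup Ω d)

/-- the cell `{S = g, Q = q}` -/
def cell (g : ℕ∞) (q : ℕ) : Set Ω := {ω | E.S ω = g ∧ E.Q ω = q}

/-- first treatment period: `G = S` if `Q = 1` and `G = ∞` if `Q = 0` -/
def G (ω : Ω) : ℕ∞ := if E.Q ω = 1 then E.S ω else ⊤

/-- observed outcome `Y_t = Σ_g 1{G = g} Y_t(g)` -/
def Yobs (t : ℕ) (ω : Ω) : ℝ := E.Ypo (E.G ω) t ω

/-- the σ-algebra generated by the covariates `X` -/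
def mX : MeasurableSpace Ω := MeasurableSpace.comap E.X inferInstance

/-- conditional cell probability `P(S = g, Q = q | X)` given `σ(X)` -/
noncomputable def pX (g : ℕ∞) (q : ℕ) : Ω → ℝ :=
  (E.μ)[(E.cell g q).indicator (fun _ => (1 : ℝ)) | E.mX]

/-- group-time average treatment effect `ATT(g,t) = E[Y_t(g) − Y_t(∞) | S = g, Q = 1]` -/
noncomputable def ATT (g t : ℕ) : ℝ :=
  ∫ ω, (E.Ypo (g : ℕ∞) t ω - E.Ypo ⊤ t ω) ∂((E.μ)[|E.cell (g : ℕ∞) 1])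

/-- outcome-regression nuisance `m^{g',q'}(X) = E[Y_t − Y_{g−1} | S = g', Q = q', X]`,
for the fixed pair `(g,t)` -/
noncomputable def mReg (g t : ℕ) (g' : ℕ∞) (q' : ℕ) : Ω → ℝ :=
  ((E.μ)[|E.cell g' q'])[fun ω => E.Yobs t ω - E.Yobs (g - 1) ω | E.mX]

/-- treated weight `w_trt = 1{S = g, Q = 1} / E[1{S = g, Q = 1}]` -/
noncomputable def wTrt (g : ℕ) : Ω → ℝ := fun ω =>
  (E.cell (g : ℕ∞) 1).indicator (fun _ => (1 : ℝ)) ω / (E.μ (E.cell (g : ℕ∞) 1)).toReal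

/-- unnormalized comparison (odds) weight `1{S = g', Q = q'}·p^{g,1}(X)/p^{g',q'}(X)` -/
noncomputable def oddsW (g : ℕ) (g' : ℕ∞) (q' : ℕ) : Ω → ℝ := fun ω =>
  (E.cell g' q').indicator (fun _ => (1 : ℝ)) ω * E.pX (g : ℕ∞) 1 ω / E.pX g' q' ω

/-- normalized comparison weight `w_{g',q'}` -/
noncomputable def wComp (g : ℕ) (g' : ℕ∞) (q' : ℕ) : Ω → ℝ := fun ω =>
  E.oddsW g g' q' ω / ∫ ω', E.oddsW g g' q' ω' ∂E.μ

/-- doubly robust DDD estimand `ATT_dr,g_c(g,t)` with comparison group `g_c` -/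
noncomputable def ATTdr (g t : ℕ) (gc : ℕ∞) : ℝ :=
  (∫ ω, (E.wTrt g ω - E.wComp g (g : ℕ∞) 0 ω) *
      (E.Yobs t ω - E.Yobs (g - 1) ω - E.mReg g t (g : ℕ∞) 0 ω) ∂E.μ)
  + (∫ ω, (E.wTrt g ω - E.wComp g gc 1 ω) *
      (E.Yobs t ω - E.Yobs (g - 1) ω - E.mReg g t gc 1 ω) ∂E.μ)
  - (∫ ω, (E.wTrt g ω - E.wComp g gc 0 ω) *
      (E.Yobs t ω - E.Yobs (g - 1) ω - E.mReg g t gc 0 ω) ∂E.μ)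

/-- Assumption SO (strong overlap): there is `ε > 0` with
`P(S = g, Q = q | X) > ε` a.s. for every cell. -/
def StrongOverlap : Prop :=
  ∃ ε > (0 : ℝ), ∀ g ∈ E.𝒮, ∀ q ≤ 1, ∀ᵐ ω ∂E.μ, ε < E.pX g q ω

/-- Assumption NA (no anticipation): for every treated group `g` and every
pre-treatment period `t < g`,
`E[Y_t(g) | S = g, Q = 1, X] = E[Y_t(∞) | S = g, Q = 1, X]` a.s. -/
def NoAnticipation : Prop :=
  ∀ g : ℕ, (g : ℕ∞) ∈ E.𝒮 → ∀ t : ℕ, 1 ≤ t → t < g →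
    ((E.μ)[|E.cell (g : ℕ∞) 1])[E.Ypo (g : ℕ∞) t | E.mX]
      =ᵐ[E.μ] ((E.μ)[|E.cell (g : ℕ∞) 1])[E.Ypo ⊤ t | E.mX]

/-- Assumption DDD-CPT (conditional DDD parallel trends): for each treated group
`g`, each `g' ∈ 𝒮` and period `t` with `t ≥ g` and `g' > max{g,t}`, a.s.
`E[ΔY_t(∞)|S=g,Q=1,X] − E[ΔY_t(∞)|S=g,Q=0,X]
  = E[ΔY_t(∞)|S=g',Q=1,X] − E[ΔY_t(∞)|S=g',Q=0,X]`. -/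
def ParallelTrends : Prop :=
  ∀ g : ℕ, (g : ℕ∞) ∈ E.𝒮 → ∀ g' ∈ E.𝒮, ∀ t : ℕ, g ≤ t → t ≤ E.T →
    max (g : ℕ∞) (t : ℕ∞) < g' →
    (fun ω =>
        (((E.μ)[|E.cell (g : ℕ∞) 1])[fun ω' => E.Ypo ⊤ t ω' - E.Ypo ⊤ (t - 1) ω' | E.mX]) ω
          - (((E.μ)[|E.cell (g : ℕ∞) 0])[fun ω' => E.Ypo ⊤ t ω' - E.Ypo ⊤ (t - 1) ω' | E.mX]) ω)
      =ᵐ[E.μ]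
    (fun ω =>
        (((E.μ)[|E.cell g' 1])[fun ω' => E.Ypo ⊤ t ω' - E.Ypo ⊤ (t - 1) ω' | E.mX]) ω
          - (((E.μ)[|E.cell g' 0])[fun ω' => E.Ypo ⊤ t ω' - E.Ypo ⊤ (t - 1) ω' | E.mX]) ω)

end Setup

end TripleDiff

open TripleDiff

section Helpers

open MeasureTheory ProbabilityTheory Set
open scoped ENNReal NNReal

namespace TripleDiff
namespace Setup

variable {Ω : Type*} [MeasurableSpace Ω] {d : ℕ} (E : Setup Ω d)

lemma hmX : E.mX ≤ ‹MeasurableSpace Ω› := by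
  rw [Setup.mX]; exact measurable_iff_comap_le.mp E.hX

lemma measurableSet_cell (g' : ℕ∞) (q : ℕ) : MeasurableSet (E.cell g' q) := by
  have h : E.cell g' q = E.S ⁻¹' {g'} ∩ E.Q ⁻¹' {q} := by
    ext ω
    exact Iff.rfl
  rw [h]
  exact (E.hS (measurableSet_singleton _)).inter (E.hQ (measurableSet_singleton _))

lemma cell_ne_zero {g' : ℕ∞} {q : ℕ} (hg' : g' ∈ E.𝒮) (hq : q ≤ 1) :
    E.μ (E.cell g' q) ≠ 0 := (E.hcells g' hg' q hq).ne'

lemma cell_ne_top (g' : ℕ∞) (q : ℕ) : E.μ (E.cell g' q) ≠ ⊤ := by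
  haveI := E.isProb; exact measure_ne_top _ _

lemma cond_prob {g' : ℕ∞} {q : ℕ} (hg' : g' ∈ E.𝒮) (hq : q ≤ 1) :
    IsProbabilityMeasure (E.μ[|E.cell g' q]) :=
  cond_isProbabilityMeasure_of_finite (E.cell_ne_zero hg' hq) (E.cell_ne_top g' q)

lemma measurable_G : Measurable E.G := by
  have : Measurable fun ω => (if E.Q ω = 1 then E.S ω else ⊤ : ℕ∞) :=
    Measurable.ite (E.hQ (measurableSet_singleton 1)) E.hS measurable_const
  exact this

lemma G_mem (ω : Ω) : E.G ω ∈ E.𝒮 := by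
  unfold Setup.G; split
  · exact E.hSmem ω
  · exact E.htop

/-- integrability of the observed outcome -/
lemma integrable_Yobs (t : ℕ) (ht1 : 1 ≤ t) (htT : t ≤ E.T) :
    Integrable (E.Yobs t) E.μ := by
  have hrep : E.Yobs t = fun ω => ∑ g' ∈ E.𝒮, ({ω' | E.G ω' = g'}.indicator
      (fun ω'' => E.Ypo g' t ω'') ω) := by
    funext ω
    rw [Finset.sum_eq_single (E.G ω)]
    · simp [Set.indicator_of_mem, Set.mem_setOf_eq, Setup.Yobs]
    · intro b _ hb
      exact Set.indicator_of_notMem (by simp [Set.mem_setOf_eq]; exact fun h => hb h.symm) _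
    · intro h; exact absurd (E.G_mem ω) h
  rw [hrep]
  apply integrable_finset_sum
  intro g' hg'
  exact (E.hYpo g' hg' t ht1 htT).indicator (E.measurable_G (measurableSet_singleton g'))

/-- integrability w.r.t. a conditional cell measure -/
lemma integrable_cond {f : Ω → ℝ} (hf : Integrable f E.μ) {c : Set Ω}
    (hc : E.μ c ≠ 0) : Integrable f (E.μ[|c]) := by
  unfold ProbabilityTheory.cond
  exact hf.restrict.smul_measure (ENNReal.inv_ne_top.mpr hc)

lemma stronglyMeasurable_pX (g' : ℕ∞) (q : ℕ) :
    StronglyMeasurable[E.mX] (E.pX g' q) := stronglyMeasurable_condExp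

lemma pX_nonneg (g' : ℕ∞) (q : ℕ) : 0 ≤ᵐ[E.μ] E.pX g' q :=
  condExp_nonneg (Filter.Eventually.of_forall fun ω => Set.indicator_nonneg (fun _ _ => zero_le_one) ω)

lemma pX_le_one (g' : ℕ∞) (q : ℕ) : E.pX g' q ≤ᵐ[E.μ] fun _ => (1 : ℝ) := by
  haveI := E.isProb
  have h := condExp_mono (m := E.mX) (μ := E.μ)
    ((integrable_const (1 : ℝ)).indicator (E.measurableSet_cell g' q)) (integrable_const (1 : ℝ))
    (Filter.Eventually.of_forall fun ω => Set.indicator_le_self' (fun _ _ => zero_le_one) ω)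
  calc E.pX g' q ≤ᵐ[E.μ] E.μ[fun _ => (1 : ℝ)|E.mX] := h
    _ =ᵐ[E.μ] fun _ => (1 : ℝ) := by rw [condExp_const (μ := E.μ) E.hmX (1 : ℝ)]


lemma integrable_indicator_one (c : Set Ω) (hc : MeasurableSet c) :
    Integrable (c.indicator fun _ => (1 : ℝ)) E.μ := by
  haveI := E.isProb
  exact (integrable_const (1 : ℝ)).indicator hc

/-- Overlap bound: the measure of an `mX`-measurable set is controlled by its
conditional cell measure. -/
lemma meas_le_cond {g' : ℕ∞} {q : ℕ} {ε : ℝ} (hε : 0 < ε)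
    (hbd : ∀ᵐ ω ∂E.μ, ε < E.pX g' q ω) {s : Set Ω} (hs : MeasurableSet[E.mX] s) :
    E.μ s ≤ ENNReal.ofReal ε⁻¹ * (E.μ (E.cell g' q) * (E.μ[|E.cell g' q]) s) := by
  haveI := E.isProb
  set c := E.cell g' q with hc
  have hs0 : MeasurableSet s := E.hmX s hs
  have hcm : MeasurableSet c := E.measurableSet_cell g' q
  have hc0 : E.μ c ≠ 0 := by
    intro h0
    have hint : ∫ ω, E.pX g' q ω ∂E.μ = (E.μ c).toReal := by
      rw [Setup.pX, integral_condExp E.hmX, integral_indicator hcm, setIntegral_const]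
      simp [measureReal_def]
    have hge : ε ≤ ∫ ω, E.pX g' q ω ∂E.μ := by
      have : ∫ _ω, ε ∂E.μ ≤ ∫ ω, E.pX g' q ω ∂E.μ :=
        integral_mono_ae (integrable_const ε) integrable_condExp (hbd.mono fun ω hω => hω.le)
      simpa using this
    rw [hint, h0] at hge
    simp at hge
    exact absurd hge (not_le.mpr hε)
  have key : (E.μ s).toReal ≤ ε⁻¹ * (E.μ (s ∩ c)).toReal := by
    have h1 : (E.μ s).toReal = ∫ _ω in s, (1 : ℝ) ∂E.μ := by
      rw [setIntegral_const]; simp [measureReal_def]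
    have hint1 : IntegrableOn (fun _ω => (1 : ℝ)) s E.μ := (integrable_const _).integrableOn
    have hint2 : IntegrableOn (fun ω => ε⁻¹ * E.pX g' q ω) s E.μ :=
      (integrable_condExp.const_mul _).integrableOn
    have hle : ∫ _ω in s, (1 : ℝ) ∂E.μ ≤ ∫ ω in s, ε⁻¹ * E.pX g' q ω ∂E.μ := by
      refine setIntegral_mono_ae hint1 hint2 ?_
      filter_upwards [hbd] with ω hω
      have : (1 : ℝ) = ε⁻¹ * ε := by field_simp
      rw [this]
      exact mul_le_mul_of_nonneg_left hω.le (inv_nonneg.mpr hε.le)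
    have h2 : ∫ ω in s, ε⁻¹ * E.pX g' q ω ∂E.μ = ε⁻¹ * (E.μ (s ∩ c)).toReal := by
      rw [integral_const_mul]
      simp only [Setup.pX]
      rw [setIntegral_condExp E.hmX (E.integrable_indicator_one c hcm) hs,
        setIntegral_indicator hcm]
      rw [setIntegral_const]; simp [measureReal_def]
    rw [h1]; rw [h2] at hle; exact hle
  have hmul : E.μ c * (E.μ[|c]) s = E.μ (s ∩ c) := by
    rw [cond_apply hcm, ← mul_assoc, ENNReal.mul_inv_cancel hc0 (E.cell_ne_top g' q), one_mul,
      Set.inter_comm]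
  rw [hmul]
  calc E.μ s = ENNReal.ofReal (E.μ s).toReal := (ENNReal.ofReal_toReal (measure_ne_top _ _)).symm
    _ ≤ ENNReal.ofReal (ε⁻¹ * (E.μ (s ∩ c)).toReal) := ENNReal.ofReal_le_ofReal key
    _ = ENNReal.ofReal ε⁻¹ * ENNReal.ofReal (E.μ (s ∩ c)).toReal := by
        rw [ENNReal.ofReal_mul (inv_nonneg.mpr hε.le)]
    _ = ENNReal.ofReal ε⁻¹ * E.μ (s ∩ c) := by
        rw [ENNReal.ofReal_toReal (measure_ne_top _ _)]

/-- transfer of a.e. equality of `mX`-measurable functions from a conditional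
cell measure to the ambient measure, under strong overlap -/
lemma ae_of_ae_cond {f h : Ω → ℝ} (hf : StronglyMeasurable[E.mX] f)
    (hh : StronglyMeasurable[E.mX] h) {g' : ℕ∞} {q : ℕ} {ε : ℝ} (hε : 0 < ε)
    (hbd : ∀ᵐ ω ∂E.μ, ε < E.pX g' q ω)
    (heq : f =ᵐ[E.μ[|E.cell g' q]] h) : f =ᵐ[E.μ] h := by
  have hs : MeasurableSet[E.mX] {ω | f ω ≠ h ω} := by
    have heqset : {ω | f ω = h ω} = (fun ω => f ω - h ω) ⁻¹' {0} := by
      ext ω; simp [sub_eq_zero]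
    have : MeasurableSet[E.mX] {ω | f ω = h ω} := by
      rw [heqset]
      exact (hf.measurable.sub hh.measurable) (measurableSet_singleton 0)
    exact this.compl
  have h0 : (E.μ[|E.cell g' q]) {ω | f ω ≠ h ω} = 0 := heq
  have := E.meas_le_cond hε hbd hs
  rw [h0, mul_zero, mul_zero] at this
  exact le_antisymm this bot_le

/-- transfer of integrability of `mX`-measurable functions from a conditional
cell measure to the ambient measure, under strong overlap -/
lemma integrable_of_cond {f : Ω → ℝ} (hfm : StronglyMeasurable[E.mX] f)
    {g' : ℕ∞} {q : ℕ} {ε : ℝ} (hε : 0 < ε)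
    (hbd : ∀ᵐ ω ∂E.μ, ε < E.pX g' q ω)
    (hfi : Integrable f (E.μ[|E.cell g' q])) : Integrable f E.μ := by
  haveI := E.isProb
  refine ⟨(hfm.mono E.hmX).aestronglyMeasurable, ?_⟩
  set c := E.cell g' q with hc
  have hφ : Measurable[E.mX] (fun ω => (‖f ω‖₊ : ℝ≥0∞)) :=
    measurable_coe_nnreal_ennreal.comp (measurable_nnnorm.comp hfm.measurable)
  have htrimle : E.μ.trim E.hmX ≤
      (ENNReal.ofReal ε⁻¹ * E.μ c) • ((E.μ[|c]).trim E.hmX) := by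
    refine Measure.le_iff.2 fun s hs => ?_
    rw [trim_measurableSet_eq E.hmX hs, Measure.smul_apply, smul_eq_mul,
      trim_measurableSet_eq E.hmX hs, mul_assoc]
    exact E.meas_le_cond hε hbd hs
  have h1 : ∫⁻ ω, ‖f ω‖₊ ∂E.μ = ∫⁻ ω, ‖f ω‖₊ ∂(E.μ.trim E.hmX) :=
    (lintegral_trim E.hmX hφ).symm
  have h2 : ∫⁻ ω, ‖f ω‖₊ ∂((E.μ[|c]).trim E.hmX) = ∫⁻ ω, ‖f ω‖₊ ∂(E.μ[|c]) :=
    lintegral_trim E.hmX hφ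
  have h3 : ∫⁻ ω, ‖f ω‖₊ ∂(E.μ.trim E.hmX) ≤
      (ENNReal.ofReal ε⁻¹ * E.μ c) * ∫⁻ ω, ‖f ω‖₊ ∂((E.μ[|c]).trim E.hmX) := by
    calc ∫⁻ ω, ‖f ω‖₊ ∂(E.μ.trim E.hmX)
        ≤ ∫⁻ ω, ‖f ω‖₊ ∂((ENNReal.ofReal ε⁻¹ * E.μ c) • ((E.μ[|c]).trim E.hmX)) :=
          lintegral_mono' htrimle le_rfl
      _ = _ := lintegral_smul_measure _ _
  have hfin : ∫⁻ ω, ‖f ω‖₊ ∂(E.μ[|c]) < ⊤ := hfi.2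
  unfold HasFiniteIntegral
  simp only [enorm_eq_nnnorm]
  rw [h1]
  refine lt_of_le_of_lt h3 ?_
  rw [h2]
  exact ENNReal.mul_lt_top
    (ENNReal.mul_lt_top ENNReal.ofReal_lt_top (measure_lt_top _ _)) hfin

/-- pull-out identity: integrating an `mX`-measurable function against a cell
indicator is the same as against the conditional cell probability -/
lemma integral_indicator_mul_eq_pX_mul {f : Ω → ℝ} (hfm : StronglyMeasurable[E.mX] f)
    (hfi : Integrable f E.μ) (g' : ℕ∞) (q : ℕ) :
    ∫ ω, (E.cell g' q).indicator (fun _ => (1 : ℝ)) ω * f ω ∂E.μ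
      = ∫ ω, E.pX g' q ω * f ω ∂E.μ := by
  haveI := E.isProb
  set c := E.cell g' q with hcdef
  have hcm : MeasurableSet c := E.measurableSet_cell g' q
  have h1c : Integrable (c.indicator fun _ => (1 : ℝ)) E.μ := E.integrable_indicator_one c hcm
  have hprod : (f * c.indicator fun _ => (1 : ℝ)) = c.indicator f := by
    funext ω
    by_cases hω : ω ∈ c <;> simp [Set.indicator_of_mem, Set.indicator_of_notMem, hω]
  have hpi : Integrable (f * c.indicator fun _ => (1 : ℝ)) E.μ := by
    rw [hprod]; exact hfi.indicator hcm
  have hce := condExp_mul_of_stronglyMeasurable_left (μ := E.μ) (m := E.mX) hfm hpi h1c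
  have : ∫ ω, (f * c.indicator fun _ => (1 : ℝ)) ω ∂E.μ = ∫ ω, f ω * E.pX g' q ω ∂E.μ := by
    rw [← integral_condExp E.hmX (f := f * c.indicator fun _ => (1 : ℝ))]
    exact integral_congr_ae hce
  rw [show (∫ ω, c.indicator (fun _ => (1 : ℝ)) ω * f ω ∂E.μ)
      = ∫ ω, (f * c.indicator fun _ => (1 : ℝ)) ω ∂E.μ from by
    congr 1; funext ω; simp [mul_comm]]
  rw [this]
  congr 1; funext ω; simp [mul_comm]

/-- the conditional integral as a normalized indicator integral -/
lemma integral_cond_eq (f : Ω → ℝ) {c : Set Ω} (hc : MeasurableSet c) :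
    ∫ ω, f ω ∂(E.μ[|c]) = (E.μ c).toReal⁻¹ * ∫ ω, c.indicator f ω ∂E.μ := by
  unfold ProbabilityTheory.cond
  rw [integral_smul_measure, integral_indicator hc, smul_eq_mul, ENNReal.toReal_inv]


lemma pX_div_abs_le {g' gd : ℕ∞} {qd q' : ℕ} {ε : ℝ} (hε : 0 < ε)
    (hbd : ∀ᵐ ω ∂E.μ, ε < E.pX g' q' ω) :
    ∀ᵐ ω ∂E.μ, ‖E.pX gd qd ω / E.pX g' q' ω‖ ≤ ε⁻¹ := by
  filter_upwards [hbd, E.pX_nonneg gd qd, E.pX_le_one gd qd] with ω h1 h2 h3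
  have hpc : 0 < E.pX g' q' ω := hε.trans h1
  rw [Real.norm_eq_abs, abs_div, abs_of_nonneg h2, abs_of_pos hpc, div_le_iff₀ hpc]
  calc E.pX gd qd ω ≤ 1 := h3
    _ = ε⁻¹ * ε := (inv_mul_cancel₀ hε.ne').symm
    _ ≤ ε⁻¹ * E.pX g' q' ω := mul_le_mul_of_nonneg_left h1.le (inv_nonneg.mpr hε.le)

lemma oddsW_abs_le (g : ℕ) {g' : ℕ∞} {q' : ℕ} {ε : ℝ} (hε : 0 < ε)
    (hbd : ∀ᵐ ω ∂E.μ, ε < E.pX g' q' ω) :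
    ∀ᵐ ω ∂E.μ, ‖E.oddsW g g' q' ω‖ ≤ ε⁻¹ := by
  filter_upwards [E.pX_div_abs_le (gd := (g : ℕ∞)) (qd := 1) hε hbd] with ω h1
  show ‖(E.cell g' q').indicator (fun _ => (1 : ℝ)) ω * E.pX (g : ℕ∞) 1 ω / E.pX g' q' ω‖ ≤ ε⁻¹
  rw [mul_div_assoc]
  by_cases hω : ω ∈ E.cell g' q'
  · rw [Set.indicator_of_mem hω, one_mul]; exact h1
  · rw [Set.indicator_of_notMem hω, zero_mul, norm_zero]
    positivity

lemma measurable_oddsW (g : ℕ) (g' : ℕ∞) (q' : ℕ) :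
    AEStronglyMeasurable (E.oddsW g g' q') E.μ := by
  have h1 : Measurable ((E.cell g' q').indicator (fun _ => (1 : ℝ))) :=
    measurable_const.indicator (E.measurableSet_cell g' q')
  have h2 := ((E.stronglyMeasurable_pX (g : ℕ∞) 1).mono E.hmX).measurable
  have h3 := ((E.stronglyMeasurable_pX g' q').mono E.hmX).measurable
  exact ((h1.mul h2).div h3).aestronglyMeasurable

lemma integrable_oddsW_mul (g : ℕ) {g' : ℕ∞} {q' : ℕ} {ε : ℝ} (hε : 0 < ε)
    (hbd : ∀ᵐ ω ∂E.μ, ε < E.pX g' q' ω) {f : Ω → ℝ} (hf : Integrable f E.μ) :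
    Integrable (fun ω => E.oddsW g g' q' ω * f ω) E.μ :=
  hf.bdd_mul (E.measurable_oddsW g g' q') (E.oddsW_abs_le g hε hbd)

lemma integral_indicator_mul (u : Ω → ℝ) {c : Set Ω} (hcm : MeasurableSet c)
    (hc0 : E.μ c ≠ 0) :
    ∫ ω, c.indicator (fun _ => (1 : ℝ)) ω * u ω ∂E.μ
      = (E.μ c).toReal * ∫ ω, u ω ∂(E.μ[|c]) := by
  haveI := E.isProb
  rw [E.integral_cond_eq u hcm, ← mul_assoc,
    mul_inv_cancel₀ (ENNReal.toReal_ne_zero.mpr ⟨hc0, measure_ne_top _ _⟩), one_mul]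
  congr 1; funext ω
  by_cases hω : ω ∈ c <;> simp [hω]

/-- Key IPW evaluation: the odds-weighted integral equals the cell-`(g,1)`-weighted
integral of the outcome regression. -/
lemma integral_oddsW_mul {g : ℕ} {g' : ℕ∞} {q' : ℕ} (hg : (g : ℕ∞) ∈ E.𝒮) (hg' : g' ∈ E.𝒮)
    (hq' : q' ≤ 1) {ε : ℝ} (hε : 0 < ε)
    (hbd : ∀ᵐ ω ∂E.μ, ε < E.pX g' q' ω) {f : Ω → ℝ} (hf : Integrable f E.μ) :
    ∫ ω, E.oddsW g g' q' ω * f ω ∂E.μ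
      = (E.μ (E.cell (g : ℕ∞) 1)).toReal
          * ∫ ω, ((E.μ[|E.cell g' q'])[f|E.mX]) ω ∂(E.μ[|E.cell (g : ℕ∞) 1]) := by
  haveI := E.isProb
  set c := E.cell g' q' with hcdef
  set c1 := E.cell (g : ℕ∞) 1 with hc1def
  have hcm : MeasurableSet c := E.measurableSet_cell _ _
  have hc1m : MeasurableSet c1 := E.measurableSet_cell _ _
  have hc0 : E.μ c ≠ 0 := E.cell_ne_zero hg' hq'
  have hc10 : E.μ c1 ≠ 0 := E.cell_ne_zero hg le_rfl
  haveI hνp : IsProbabilityMeasure (E.μ[|c]) := E.cond_prob hg' hq'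
  set ν := E.μ[|c] with hνdef
  set mc := ν[f|E.mX] with hmcdef
  set h := fun ω => E.pX (g : ℕ∞) 1 ω / E.pX g' q' ω with hhdef
  have hhSM : StronglyMeasurable[E.mX] h :=
    Measurable.stronglyMeasurable
      (((E.stronglyMeasurable_pX (g : ℕ∞) 1).measurable).div
        ((E.stronglyMeasurable_pX g' q').measurable))
  have hhbd : ∀ᵐ ω ∂E.μ, ‖h ω‖ ≤ ε⁻¹ := E.pX_div_abs_le hε hbd
  have hmcSM : StronglyMeasurable[E.mX] mc := stronglyMeasurable_condExp
  have hmcν : Integrable mc ν := integrable_condExp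
  have hmcμ : Integrable mc E.μ := E.integrable_of_cond hmcSM hε hbd hmcν
  have hfν : Integrable f ν := E.integrable_cond hf hc0
  have hhbdν : ∀ᵐ ω ∂ν, ‖h ω‖ ≤ ε⁻¹ := cond_absolutelyContinuous.ae_le hhbd
  have hhfν : Integrable (h * f) ν :=
    hfν.bdd_mul (hhSM.mono E.hmX).aestronglyMeasurable hhbdν
  have hhmcμ : Integrable (fun ω => h ω * mc ω) E.μ :=
    hmcμ.bdd_mul (hhSM.mono E.hmX).aestronglyMeasurable hhbd
  have step3 : ∫ ω, h ω * f ω ∂ν = ∫ ω, h ω * mc ω ∂ν := by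
    have hce : ν[h * f|E.mX] =ᵐ[ν] h * mc :=
      condExp_mul_of_stronglyMeasurable_left hhSM hhfν hfν
    calc ∫ ω, h ω * f ω ∂ν = ∫ ω, (ν[h * f|E.mX]) ω ∂ν :=
          (integral_condExp E.hmX).symm
      _ = ∫ ω, (h * mc) ω ∂ν := integral_congr_ae hce
      _ = ∫ ω, h ω * mc ω ∂ν := rfl
  have step6 : ∫ ω, E.pX g' q' ω * (h ω * mc ω) ∂E.μ
      = ∫ ω, E.pX (g : ℕ∞) 1 ω * mc ω ∂E.μ := by
    refine integral_congr_ae ?_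
    filter_upwards [hbd] with ω hω
    have hne : E.pX g' q' ω ≠ 0 := (hε.trans hω).ne'
    show E.pX g' q' ω * (E.pX (g : ℕ∞) 1 ω / E.pX g' q' ω * mc ω) = _
    field_simp
  calc ∫ ω, E.oddsW g g' q' ω * f ω ∂E.μ
      = ∫ ω, c.indicator (fun _ => (1 : ℝ)) ω * (h ω * f ω) ∂E.μ := by
        congr 1; funext ω
        show c.indicator (fun _ => (1 : ℝ)) ω * E.pX (g : ℕ∞) 1 ω / E.pX g' q' ω * f ω = _
        ring
    _ = (E.μ c).toReal * ∫ ω, h ω * f ω ∂ν := E.integral_indicator_mul _ hcm hc0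
    _ = (E.μ c).toReal * ∫ ω, h ω * mc ω ∂ν := by rw [step3]
    _ = ∫ ω, c.indicator (fun _ => (1 : ℝ)) ω * (h ω * mc ω) ∂E.μ :=
        (E.integral_indicator_mul _ hcm hc0).symm
    _ = ∫ ω, E.pX g' q' ω * (h ω * mc ω) ∂E.μ :=
        E.integral_indicator_mul_eq_pX_mul (hhSM.mul hmcSM) hhmcμ g' q'
    _ = ∫ ω, E.pX (g : ℕ∞) 1 ω * mc ω ∂E.μ := step6
    _ = ∫ ω, c1.indicator (fun _ => (1 : ℝ)) ω * mc ω ∂E.μ :=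
        (E.integral_indicator_mul_eq_pX_mul hmcSM hmcμ (g : ℕ∞) 1).symm
    _ = (E.μ c1).toReal * ∫ ω, mc ω ∂(E.μ[|c1]) := E.integral_indicator_mul _ hc1m hc10

/-- normalization of the odds weights -/
lemma integral_oddsW {g : ℕ} {g' : ℕ∞} {q' : ℕ} (hg : (g : ℕ∞) ∈ E.𝒮) (hg' : g' ∈ E.𝒮)
    (hq' : q' ≤ 1) {ε : ℝ} (hε : 0 < ε)
    (hbd : ∀ᵐ ω ∂E.μ, ε < E.pX g' q' ω) :
    ∫ ω, E.oddsW g g' q' ω ∂E.μ = (E.μ (E.cell (g : ℕ∞) 1)).toReal := by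
  haveI := E.isProb
  set c := E.cell g' q' with hcdef
  have hcm : MeasurableSet c := E.measurableSet_cell _ _
  set h := fun ω => E.pX (g : ℕ∞) 1 ω / E.pX g' q' ω with hhdef
  have hhSM : StronglyMeasurable[E.mX] h :=
    Measurable.stronglyMeasurable
      (((E.stronglyMeasurable_pX (g : ℕ∞) 1).measurable).div
        ((E.stronglyMeasurable_pX g' q').measurable))
  have hhbd : ∀ᵐ ω ∂E.μ, ‖h ω‖ ≤ ε⁻¹ := E.pX_div_abs_le hε hbd
  have hhμ : Integrable h E.μ := by
    have := (integrable_const (1 : ℝ)).bdd_mul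
      ((hhSM.mono E.hmX).aestronglyMeasurable) hhbd
    simpa using this
  calc ∫ ω, E.oddsW g g' q' ω ∂E.μ
      = ∫ ω, c.indicator (fun _ => (1 : ℝ)) ω * h ω ∂E.μ := by
        congr 1; funext ω
        show c.indicator (fun _ => (1 : ℝ)) ω * E.pX (g : ℕ∞) 1 ω / E.pX g' q' ω = _
        rw [mul_div_assoc]
    _ = ∫ ω, E.pX g' q' ω * h ω ∂E.μ := E.integral_indicator_mul_eq_pX_mul hhSM hhμ g' q'
    _ = ∫ ω, E.pX (g : ℕ∞) 1 ω ∂E.μ := by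
        refine integral_congr_ae ?_
        filter_upwards [hbd] with ω hω
        have hne : E.pX g' q' ω ≠ 0 := (hε.trans hω).ne'
        show E.pX g' q' ω * (E.pX (g : ℕ∞) 1 ω / E.pX g' q' ω) = _
        field_simp
    _ = (E.μ (E.cell (g : ℕ∞) 1)).toReal := by
        simp only [Setup.pX]
        rw [integral_condExp E.hmX, integral_indicator (E.measurableSet_cell _ _),
          setIntegral_const]
        simp [measureReal_def]

lemma ae_cond_mem {c : Set Ω} (hcm : MeasurableSet c) : ∀ᵐ ω ∂(E.μ[|c]), ω ∈ c := by
  have h0 : (E.μ[|c]) cᶜ = 0 := by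
    unfold ProbabilityTheory.cond
    rw [Measure.smul_apply, Measure.restrict_apply hcm.compl, Set.compl_inter_self]
    simp
  rw [ae_iff]
  exact h0

lemma Yobs_eq_on_cell1 (g' : ℕ∞) (s : ℕ) :
    ∀ ω ∈ E.cell g' 1, E.Yobs s ω = E.Ypo g' s ω := by
  intro ω hω
  obtain ⟨hSω, hQω⟩ := hω
  unfold Setup.Yobs Setup.G
  rw [if_pos hQω, hSω]

lemma Yobs_eq_on_cell0 (g' : ℕ∞) (s : ℕ) :
    ∀ ω ∈ E.cell g' 0, E.Yobs s ω = E.Ypo ⊤ s ω := by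
  intro ω hω
  obtain ⟨hSω, hQω⟩ := hω
  unfold Setup.Yobs Setup.G
  rw [if_neg (by simp [hQω])]

lemma condexp_cell_congr {g' : ℕ∞} {q' : ℕ} {ε : ℝ} (hε : 0 < ε)
    (hbd : ∀ᵐ ω ∂E.μ, ε < E.pX g' q' ω) {f₁ f₂ : Ω → ℝ}
    (h : f₁ =ᵐ[E.μ[|E.cell g' q']] f₂) :
    (E.μ[|E.cell g' q'])[f₁|E.mX] =ᵐ[E.μ] (E.μ[|E.cell g' q'])[f₂|E.mX] :=
  E.ae_of_ae_cond stronglyMeasurable_condExp stronglyMeasurable_condExp hε hbd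
    (condExp_congr_ae h)

lemma condexp_cell_sub {g' : ℕ∞} {q' : ℕ} {ε : ℝ} (hε : 0 < ε)
    (hbd : ∀ᵐ ω ∂E.μ, ε < E.pX g' q' ω) {f₁ f₂ : Ω → ℝ}
    (h1 : Integrable f₁ (E.μ[|E.cell g' q'])) (h2 : Integrable f₂ (E.μ[|E.cell g' q'])) :
    (E.μ[|E.cell g' q'])[fun ω => f₁ ω - f₂ ω|E.mX] =ᵐ[E.μ]
      fun ω => ((E.μ[|E.cell g' q'])[f₁|E.mX]) ω - ((E.μ[|E.cell g' q'])[f₂|E.mX]) ω :=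
  E.ae_of_ae_cond stronglyMeasurable_condExp
    (stronglyMeasurable_condExp.sub stronglyMeasurable_condExp) hε hbd
    (condExp_sub h1 h2 E.mX)

lemma sm_sum {ι : Type*} (s : Finset ι) (F : ι → Ω → ℝ)
    (h : ∀ i ∈ s, StronglyMeasurable[E.mX] (F i)) :
    StronglyMeasurable[E.mX] (∑ i ∈ s, F i) := by
  classical
  induction s using Finset.induction_on with
  | empty => rw [Finset.sum_empty]; exact stronglyMeasurable_const
  | @insert a s ha ih =>
      rw [Finset.sum_insert ha]
      exact (h a (Finset.mem_insert_self a s)).add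
        (ih fun i hi => h i (Finset.mem_insert_of_mem hi))

lemma condexp_cell_sum {g' : ℕ∞} {q' : ℕ} {ε : ℝ} (hε : 0 < ε)
    (hbd : ∀ᵐ ω ∂E.μ, ε < E.pX g' q' ω) {ι : Type*} (s : Finset ι) (F : ι → Ω → ℝ)
    (h : ∀ i ∈ s, Integrable (F i) (E.μ[|E.cell g' q'])) :
    (E.μ[|E.cell g' q'])[∑ i ∈ s, F i|E.mX] =ᵐ[E.μ]
      ∑ i ∈ s, (E.μ[|E.cell g' q'])[F i|E.mX] :=
  E.ae_of_ae_cond stronglyMeasurable_condExp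
    (E.sm_sum s _ fun i _ => stronglyMeasurable_condExp) hε hbd
    (condExp_finsetSum h E.mX)

lemma telescope (F : ℕ → ℝ) {a b : ℕ} (ha : 1 ≤ a) (hab : a ≤ b) :
    F b - F (a - 1) = ∑ s ∈ Finset.Icc a b, (F s - F (s - 1)) := by
  induction b, hab using Nat.le_induction with
  | base =>
      rw [Finset.Icc_self, Finset.sum_singleton]
  | succ n hn ih =>
      rw [Finset.sum_Icc_succ_top (by omega : a ≤ n + 1), ← ih]
      have h1 : n + 1 - 1 = n := rfl
      rw [h1]; ring

lemma integral_wTrt_mul {g : ℕ} (hg : (g : ℕ∞) ∈ E.𝒮) {f : Ω → ℝ}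
    (hf : Integrable f E.μ) :
    ∫ ω, E.wTrt g ω * f ω ∂E.μ = ∫ ω, f ω ∂(E.μ[|E.cell (g : ℕ∞) 1]) := by
  haveI := E.isProb
  have hc0 : E.μ (E.cell (g : ℕ∞) 1) ≠ 0 := E.cell_ne_zero hg le_rfl
  have hK : ((E.μ (E.cell (g : ℕ∞) 1)).toReal : ℝ) ≠ 0 :=
    ENNReal.toReal_ne_zero.mpr ⟨hc0, measure_ne_top _ _⟩
  have h : ∀ ω, E.wTrt g ω * f ω = (E.μ (E.cell (g : ℕ∞) 1)).toReal⁻¹ *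
      ((E.cell (g : ℕ∞) 1).indicator (fun _ => (1 : ℝ)) ω * f ω) := by
    intro ω
    show (E.cell (g : ℕ∞) 1).indicator (fun _ => (1 : ℝ)) ω
        / (E.μ (E.cell (g : ℕ∞) 1)).toReal * f ω = _
    field_simp
  simp_rw [h]
  rw [integral_const_mul,
    E.integral_indicator_mul f (E.measurableSet_cell _ _) hc0, ← mul_assoc,
    inv_mul_cancel₀ hK, one_mul]

lemma integrable_wTrt_mul (g : ℕ) {f : Ω → ℝ} (hf : Integrable f E.μ) :
    Integrable (fun ω => E.wTrt g ω * f ω) E.μ := by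
  refine hf.bdd_mul (c := (E.μ (E.cell (g : ℕ∞) 1)).toReal⁻¹)
    ((measurable_const.indicator
      (E.measurableSet_cell (g : ℕ∞) 1)).div_const _).aestronglyMeasurable
    (Filter.Eventually.of_forall fun ω => ?_)
  show ‖(E.cell (g : ℕ∞) 1).indicator (fun _ => (1 : ℝ)) ω
      / (E.μ (E.cell (g : ℕ∞) 1)).toReal‖ ≤ _
  rw [Real.norm_eq_abs, abs_div, abs_of_nonneg ENNReal.toReal_nonneg, div_eq_mul_inv]
  by_cases hω : ω ∈ E.cell (g : ℕ∞) 1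
  · rw [Set.indicator_of_mem hω]; simp
  · rw [Set.indicator_of_notMem hω]
    simp only [abs_zero, zero_mul]
    positivity

lemma integrable_wComp_mul (g : ℕ) {g' : ℕ∞} {q' : ℕ} {ε : ℝ} (hε : 0 < ε)
    (hbd : ∀ᵐ ω ∂E.μ, ε < E.pX g' q' ω) {f : Ω → ℝ} (hf : Integrable f E.μ) :
    Integrable (fun ω => E.wComp g g' q' ω * f ω) E.μ := by
  have h : ∀ ω, E.wComp g g' q' ω * f ω
      = (∫ ω', E.oddsW g g' q' ω' ∂E.μ)⁻¹ * (E.oddsW g g' q' ω * f ω) := by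
    intro ω
    show E.oddsW g g' q' ω / (∫ ω', E.oddsW g g' q' ω' ∂E.μ) * f ω = _
    ring
  simp_rw [h]
  exact (E.integrable_oddsW_mul g hε hbd hf).const_mul _

lemma integral_wComp_mul {g : ℕ} {g' : ℕ∞} {q' : ℕ} (hg : (g : ℕ∞) ∈ E.𝒮)
    (hg' : g' ∈ E.𝒮) (hq' : q' ≤ 1) {ε : ℝ} (hε : 0 < ε)
    (hbd : ∀ᵐ ω ∂E.μ, ε < E.pX g' q' ω) {f : Ω → ℝ} (hf : Integrable f E.μ) :
    ∫ ω, E.wComp g g' q' ω * f ω ∂E.μ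
      = ∫ ω, ((E.μ[|E.cell g' q'])[f|E.mX]) ω ∂(E.μ[|E.cell (g : ℕ∞) 1]) := by
  haveI := E.isProb
  have hK : ((E.μ (E.cell (g : ℕ∞) 1)).toReal : ℝ) ≠ 0 :=
    ENNReal.toReal_ne_zero.mpr ⟨E.cell_ne_zero hg le_rfl, measure_ne_top _ _⟩
  have h : ∀ ω, E.wComp g g' q' ω * f ω
      = E.oddsW g g' q' ω * f ω / (∫ ω', E.oddsW g g' q' ω' ∂E.μ) := by
    intro ω
    show E.oddsW g g' q' ω / (∫ ω', E.oddsW g g' q' ω' ∂E.μ) * f ω = _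
    ring
  simp_rw [h]
  rw [integral_div, E.integral_oddsW_mul hg hg' hq' hε hbd hf,
    E.integral_oddsW hg hg' hq' hε hbd, mul_comm, mul_div_assoc, div_self hK, mul_one]

lemma g_bounds {g : ℕ} (hg : (g : ℕ∞) ∈ E.𝒮) : 2 ≤ g ∧ g ≤ E.T := by
  obtain ⟨n, hn2, hnT, hne⟩ := E.h𝒮 _ hg (by simp)
  have hgn : g = n := Nat.cast_inj.mp hne
  omega

/-- On an eligible comparison cell `(g',1)` with `t < g'`, the regression of the
observed outcome difference coincides with that of the never-treated potential
outcome difference (uses no anticipation when `g' ≠ ⊤`). -/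
lemma condexp_cell1_eq (hNA : E.NoAnticipation) {g t : ℕ} (hg2 : 2 ≤ g) (hgt : g ≤ t)
    (htT : t ≤ E.T) {g' : ℕ∞} (hg' : g' ∈ E.𝒮) (htg' : (t : ℕ∞) < g')
    {ε : ℝ} (hε : 0 < ε) (hbd : ∀ᵐ ω ∂E.μ, ε < E.pX g' 1 ω) :
    (E.μ[|E.cell g' 1])[fun ω => E.Yobs t ω - E.Yobs (g - 1) ω|E.mX] =ᵐ[E.μ]
      (E.μ[|E.cell g' 1])[fun ω => E.Ypo ⊤ t ω - E.Ypo ⊤ (g - 1) ω|E.mX] := by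
  have step1 : (E.μ[|E.cell g' 1])[fun ω => E.Yobs t ω - E.Yobs (g - 1) ω|E.mX] =ᵐ[E.μ]
      (E.μ[|E.cell g' 1])[fun ω => E.Ypo g' t ω - E.Ypo g' (g - 1) ω|E.mX] := by
    refine E.condexp_cell_congr hε hbd ?_
    filter_upwards [E.ae_cond_mem (E.measurableSet_cell g' 1)] with ω hω
    show E.Yobs t ω - E.Yobs (g - 1) ω = _
    rw [E.Yobs_eq_on_cell1 g' t ω hω, E.Yobs_eq_on_cell1 g' (g - 1) ω hω]
  refine step1.trans ?_
  by_cases htop : g' = ⊤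
  · subst htop
    exact Filter.EventuallyEq.rfl
  · obtain ⟨n, hn2, hnT, hne⟩ := E.h𝒮 g' hg' htop
    subst hne
    have hc0 : E.μ (E.cell (n : ℕ∞) 1) ≠ 0 := E.cell_ne_zero hg' le_rfl
    have hnt : t < n := by exact_mod_cast htg'
    have hi1 : Integrable (E.Ypo (n : ℕ∞) t) (E.μ[|E.cell (n : ℕ∞) 1]) :=
      E.integrable_cond (E.hYpo _ hg' t (by omega) htT) hc0
    have hi2 : Integrable (E.Ypo (n : ℕ∞) (g - 1)) (E.μ[|E.cell (n : ℕ∞) 1]) :=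
      E.integrable_cond (E.hYpo _ hg' (g - 1) (by omega) (by omega)) hc0
    have hi3 : Integrable (E.Ypo ⊤ t) (E.μ[|E.cell (n : ℕ∞) 1]) :=
      E.integrable_cond (E.hYpo _ E.htop t (by omega) htT) hc0
    have hi4 : Integrable (E.Ypo ⊤ (g - 1)) (E.μ[|E.cell (n : ℕ∞) 1]) :=
      E.integrable_cond (E.hYpo _ E.htop (g - 1) (by omega) (by omega)) hc0
    calc (E.μ[|E.cell (n : ℕ∞) 1])[fun ω => E.Ypo (n : ℕ∞) t ω - E.Ypo (n : ℕ∞) (g - 1) ω|E.mX]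
        =ᵐ[E.μ] fun ω => ((E.μ[|E.cell (n : ℕ∞) 1])[E.Ypo (n : ℕ∞) t|E.mX]) ω
          - ((E.μ[|E.cell (n : ℕ∞) 1])[E.Ypo (n : ℕ∞) (g - 1)|E.mX]) ω :=
          E.condexp_cell_sub hε hbd hi1 hi2
      _ =ᵐ[E.μ] fun ω => ((E.μ[|E.cell (n : ℕ∞) 1])[E.Ypo ⊤ t|E.mX]) ω
          - ((E.μ[|E.cell (n : ℕ∞) 1])[E.Ypo ⊤ (g - 1)|E.mX]) ω := by
          filter_upwards [hNA n hg' t (by omega) hnt, hNA n hg' (g - 1) (by omega) (by omega)]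
            with ω h1 h2
          rw [h1, h2]
      _ =ᵐ[E.μ] (E.μ[|E.cell (n : ℕ∞) 1])[fun ω => E.Ypo ⊤ t ω - E.Ypo ⊤ (g - 1) ω|E.mX] :=
          (E.condexp_cell_sub hε hbd hi3 hi4).symm

/-- Telescoped parallel-trends identity over `[g-1, t]`. -/
lemma pt_comb (hPT : E.ParallelTrends) {g t : ℕ} (hg : (g : ℕ∞) ∈ E.𝒮) (hg2 : 2 ≤ g)
    (hgt : g ≤ t) (htT : t ≤ E.T) {gc : ℕ∞} (hgc : gc ∈ E.𝒮) (hgct : (t : ℕ∞) < gc)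
    {ε : ℝ} (hε : 0 < ε)
    (hbd1 : ∀ᵐ ω ∂E.μ, ε < E.pX (g : ℕ∞) 1 ω)
    (hbd0 : ∀ᵐ ω ∂E.μ, ε < E.pX (g : ℕ∞) 0 ω)
    (hbdc1 : ∀ᵐ ω ∂E.μ, ε < E.pX gc 1 ω)
    (hbdc0 : ∀ᵐ ω ∂E.μ, ε < E.pX gc 0 ω) :
    (fun ω => ((E.μ[|E.cell (g : ℕ∞) 1])[fun ω' => E.Ypo ⊤ t ω' - E.Ypo ⊤ (g - 1) ω'|E.mX]) ω
        - ((E.μ[|E.cell (g : ℕ∞) 0])[fun ω' => E.Ypo ⊤ t ω' - E.Ypo ⊤ (g - 1) ω'|E.mX]) ω)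
      =ᵐ[E.μ]
    (fun ω => ((E.μ[|E.cell gc 1])[fun ω' => E.Ypo ⊤ t ω' - E.Ypo ⊤ (g - 1) ω'|E.mX]) ω
        - ((E.μ[|E.cell gc 0])[fun ω' => E.Ypo ⊤ t ω' - E.Ypo ⊤ (g - 1) ω'|E.mX]) ω) := by
  classical
  set F : ℕ → Ω → ℝ := fun s => fun ω' => E.Ypo ⊤ s ω' - E.Ypo ⊤ (s - 1) ω' with hF
  have hΔsum : (fun ω' => E.Ypo ⊤ t ω' - E.Ypo ⊤ (g - 1) ω') = ∑ s ∈ Finset.Icc g t, F s := by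
    funext ω'
    rw [Finset.sum_apply]
    exact Setup.telescope (fun s => E.Ypo ⊤ s ω') (by omega) hgt
  have hint : ∀ (g'' : ℕ∞) (q'' : ℕ), g'' ∈ E.𝒮 → q'' ≤ 1 →
      ∀ s ∈ Finset.Icc g t, Integrable (F s) (E.μ[|E.cell g'' q'']) := by
    intro g'' q'' hg'' hq'' s hs
    rw [Finset.mem_Icc] at hs
    exact E.integrable_cond ((E.hYpo _ E.htop s (by omega) (by omega)).sub
      (E.hYpo _ E.htop (s - 1) (by omega) (by omega))) (E.cell_ne_zero hg'' hq'')
  have hsum : ∀ (g'' : ℕ∞) (q'' : ℕ), g'' ∈ E.𝒮 → q'' ≤ 1 →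
      (∀ᵐ ω ∂E.μ, ε < E.pX g'' q'' ω) →
      (E.μ[|E.cell g'' q''])[fun ω' => E.Ypo ⊤ t ω' - E.Ypo ⊤ (g - 1) ω'|E.mX] =ᵐ[E.μ]
        ∑ s ∈ Finset.Icc g t, (E.μ[|E.cell g'' q''])[F s|E.mX] := by
    intro g'' q'' hg'' hq'' hbd
    rw [hΔsum]
    exact E.condexp_cell_sum hε hbd _ F (hint g'' q'' hg'' hq'')
  have hpt : ∀ᵐ ω ∂E.μ, ∀ s ∈ Finset.Icc g t,
      ((E.μ[|E.cell (g : ℕ∞) 1])[F s|E.mX]) ω - ((E.μ[|E.cell (g : ℕ∞) 0])[F s|E.mX]) ω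
        = ((E.μ[|E.cell gc 1])[F s|E.mX]) ω - ((E.μ[|E.cell gc 0])[F s|E.mX]) ω := by
    rw [Finset.eventually_all]
    intro s hs
    rw [Finset.mem_Icc] at hs
    have hmax : max (g : ℕ∞) (s : ℕ∞) < gc := by
      refine max_lt (lt_of_le_of_lt ?_ hgct) (lt_of_le_of_lt ?_ hgct) <;>
        exact_mod_cast Nat.cast_le.mpr (by omega)
    exact (hPT g hg gc hgc s hs.1 (by omega) hmax).mono fun ω h => h
  filter_upwards [hsum _ _ hg le_rfl hbd1, hsum _ _ hg (by omega) hbd0,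
    hsum _ _ hgc le_rfl hbdc1, hsum _ _ hgc (by omega) hbdc0, hpt] with ω e1 e2 e3 e4 ept
  rw [e1, e2, e3, e4]
  simp only [Finset.sum_apply]
  rw [← Finset.sum_sub_distrib, ← Finset.sum_sub_distrib]
  exact Finset.sum_congr rfl ept

end Setup
end TripleDiff
end Helpers


/-- **Inverse-probability-weighting identification (Theorem 1, IPW part).**
Under Assumptions SO, NA, and DDD-CPT, for every `g ∈ 𝒢_trt`, every `t` with
`g ≤ t ≤ T`, and every `g_c ∈ 𝒮` with `g_c > t`,
`ATT(g,t) = E[(w_trt − w_{g,0})·(Y_t − Y_{g−1})]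
  − E[(w_{g_c,1} − w_{g_c,0})·(Y_t − Y_{g−1})]`. -/
theorem ipw_identification {Ω : Type*} [MeasurableSpace Ω] {d : ℕ} (E : Setup Ω d)
    (hSO : E.StrongOverlap) (hNA : E.NoAnticipation) (hPT : E.ParallelTrends)
    (g : ℕ) (hg : (g : ℕ∞) ∈ E.𝒮) (t : ℕ) (hgt : g ≤ t) (htT : t ≤ E.T)
    (gc : ℕ∞) (hgc : gc ∈ E.𝒮) (hgct : (t : ℕ∞) < gc) :
    E.ATT g t
      = (∫ ω, (E.wTrt g ω - E.wComp g (g : ℕ∞) 0 ω) *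
            (E.Yobs t ω - E.Yobs (g - 1) ω) ∂E.μ)
        - (∫ ω, (E.wComp g gc 1 ω - E.wComp g gc 0 ω) *
            (E.Yobs t ω - E.Yobs (g - 1) ω) ∂E.μ) := by
  classical
  haveI := E.isProb
  obtain ⟨hg2, hgT⟩ := E.g_bounds hg
  obtain ⟨ε, hε, hso⟩ := hSO
  have hbd1 : ∀ᵐ ω ∂E.μ, ε < E.pX (g : ℕ∞) 1 ω := hso _ hg 1 le_rfl
  have hbd0 : ∀ᵐ ω ∂E.μ, ε < E.pX (g : ℕ∞) 0 ω := hso _ hg 0 (by omega)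
  have hbdc1 : ∀ᵐ ω ∂E.μ, ε < E.pX gc 1 ω := hso _ hgc 1 le_rfl
  have hbdc0 : ∀ᵐ ω ∂E.μ, ε < E.pX gc 0 ω := hso _ hgc 0 (by omega)
  have hc10 : E.μ (E.cell (g : ℕ∞) 1) ≠ 0 := E.cell_ne_zero hg le_rfl
  haveI : IsProbabilityMeasure (E.μ[|E.cell (g : ℕ∞) 1]) := E.cond_prob hg le_rfl
  have hΔint : Integrable (fun ω => E.Yobs t ω - E.Yobs (g - 1) ω) E.μ :=
    (E.integrable_Yobs t (by omega) htT).sub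
      (E.integrable_Yobs (g - 1) (by omega) (by omega))
  set ν := E.μ[|E.cell (g : ℕ∞) 1] with hνdef
  -- split the two weighted integrals
  have hsplit1 : ∫ ω, (E.wTrt g ω - E.wComp g (g : ℕ∞) 0 ω)
        * (E.Yobs t ω - E.Yobs (g - 1) ω) ∂E.μ
      = (∫ ω, E.wTrt g ω * (E.Yobs t ω - E.Yobs (g - 1) ω) ∂E.μ)
        - ∫ ω, E.wComp g (g : ℕ∞) 0 ω * (E.Yobs t ω - E.Yobs (g - 1) ω) ∂E.μ := by
    rw [← integral_sub (E.integrable_wTrt_mul g hΔint)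
      (E.integrable_wComp_mul g hε hbd0 hΔint)]
    congr 1; funext ω; ring
  have hsplit2 : ∫ ω, (E.wComp g gc 1 ω - E.wComp g gc 0 ω)
        * (E.Yobs t ω - E.Yobs (g - 1) ω) ∂E.μ
      = (∫ ω, E.wComp g gc 1 ω * (E.Yobs t ω - E.Yobs (g - 1) ω) ∂E.μ)
        - ∫ ω, E.wComp g gc 0 ω * (E.Yobs t ω - E.Yobs (g - 1) ω) ∂E.μ := by
    rw [← integral_sub (E.integrable_wComp_mul g hε hbdc1 hΔint)
      (E.integrable_wComp_mul g hε hbdc0 hΔint)]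
    congr 1; funext ω; ring
  -- evaluate the weighted integrals
  have hA1 : ∫ ω, E.wTrt g ω * (E.Yobs t ω - E.Yobs (g - 1) ω) ∂E.μ
      = ∫ ω, (E.Yobs t ω - E.Yobs (g - 1) ω) ∂ν :=
    E.integral_wTrt_mul hg hΔint
  have hA2 : ∫ ω, E.wComp g (g : ℕ∞) 0 ω * (E.Yobs t ω - E.Yobs (g - 1) ω) ∂E.μ
      = ∫ ω, ((E.μ[|E.cell (g : ℕ∞) 0])[fun ω' => E.Yobs t ω' - E.Yobs (g - 1) ω'|E.mX]) ω ∂ν :=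
    E.integral_wComp_mul hg hg (by omega) hε hbd0 hΔint
  have hA3 : ∫ ω, E.wComp g gc 1 ω * (E.Yobs t ω - E.Yobs (g - 1) ω) ∂E.μ
      = ∫ ω, ((E.μ[|E.cell gc 1])[fun ω' => E.Yobs t ω' - E.Yobs (g - 1) ω'|E.mX]) ω ∂ν :=
    E.integral_wComp_mul hg hgc le_rfl hε hbdc1 hΔint
  have hA4 : ∫ ω, E.wComp g gc 0 ω * (E.Yobs t ω - E.Yobs (g - 1) ω) ∂E.μ
      = ∫ ω, ((E.μ[|E.cell gc 0])[fun ω' => E.Yobs t ω' - E.Yobs (g - 1) ω'|E.mX]) ω ∂ν :=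
    E.integral_wComp_mul hg hgc (by omega) hε hbdc0 hΔint
  -- identify the outcome regressions with never-treated potential outcome regressions
  have hm0 : ((E.μ[|E.cell (g : ℕ∞) 0])[fun ω' => E.Yobs t ω' - E.Yobs (g - 1) ω'|E.mX])
      =ᵐ[E.μ] ((E.μ[|E.cell (g : ℕ∞) 0])[fun ω' => E.Ypo ⊤ t ω' - E.Ypo ⊤ (g - 1) ω'|E.mX]) := by
    refine E.condexp_cell_congr hε hbd0 ?_
    filter_upwards [E.ae_cond_mem (E.measurableSet_cell (g : ℕ∞) 0)] with ω hω
    show E.Yobs t ω - E.Yobs (g - 1) ω = _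
    rw [E.Yobs_eq_on_cell0 _ t ω hω, E.Yobs_eq_on_cell0 _ (g - 1) ω hω]
  have hmc1 := E.condexp_cell1_eq hNA hg2 hgt htT hgc hgct hε hbdc1
  have hmc0 : ((E.μ[|E.cell gc 0])[fun ω' => E.Yobs t ω' - E.Yobs (g - 1) ω'|E.mX])
      =ᵐ[E.μ] ((E.μ[|E.cell gc 0])[fun ω' => E.Ypo ⊤ t ω' - E.Ypo ⊤ (g - 1) ω'|E.mX]) := by
    refine E.condexp_cell_congr hε hbdc0 ?_
    filter_upwards [E.ae_cond_mem (E.measurableSet_cell gc 0)] with ω hω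
    show E.Yobs t ω - E.Yobs (g - 1) ω = _
    rw [E.Yobs_eq_on_cell0 _ t ω hω, E.Yobs_eq_on_cell0 _ (g - 1) ω hω]
  have hI2 : ∫ ω, ((E.μ[|E.cell (g : ℕ∞) 0])[fun ω' => E.Yobs t ω' - E.Yobs (g - 1) ω'|E.mX]) ω ∂ν
      = ∫ ω, ((E.μ[|E.cell (g : ℕ∞) 0])[fun ω' => E.Ypo ⊤ t ω' - E.Ypo ⊤ (g - 1) ω'|E.mX]) ω ∂ν :=
    integral_congr_ae (cond_absolutelyContinuous.ae_le hm0)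
  have hI3 : ∫ ω, ((E.μ[|E.cell gc 1])[fun ω' => E.Yobs t ω' - E.Yobs (g - 1) ω'|E.mX]) ω ∂ν
      = ∫ ω, ((E.μ[|E.cell gc 1])[fun ω' => E.Ypo ⊤ t ω' - E.Ypo ⊤ (g - 1) ω'|E.mX]) ω ∂ν :=
    integral_congr_ae (cond_absolutelyContinuous.ae_le hmc1)
  have hI4 : ∫ ω, ((E.μ[|E.cell gc 0])[fun ω' => E.Yobs t ω' - E.Yobs (g - 1) ω'|E.mX]) ω ∂ν
      = ∫ ω, ((E.μ[|E.cell gc 0])[fun ω' => E.Ypo ⊤ t ω' - E.Ypo ⊤ (g - 1) ω'|E.mX]) ω ∂ν :=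
    integral_congr_ae (cond_absolutelyContinuous.ae_le hmc0)
  -- the treated-cell integral: no anticipation
  have hiYg_t : Integrable (E.Ypo (g : ℕ∞) t) ν :=
    E.integrable_cond (E.hYpo _ hg t (by omega) htT) hc10
  have hiYg_g1 : Integrable (E.Ypo (g : ℕ∞) (g - 1)) ν :=
    E.integrable_cond (E.hYpo _ hg (g - 1) (by omega) (by omega)) hc10
  have hiYtop_t : Integrable (E.Ypo ⊤ t) ν :=
    E.integrable_cond (E.hYpo _ E.htop t (by omega) htT) hc10
  have hiYtop_g1 : Integrable (E.Ypo ⊤ (g - 1)) ν :=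
    E.integrable_cond (E.hYpo _ E.htop (g - 1) (by omega) (by omega)) hc10
  have hstep : ∫ ω, (E.Yobs t ω - E.Yobs (g - 1) ω) ∂ν
      = ∫ ω, (E.Ypo (g : ℕ∞) t ω - E.Ypo (g : ℕ∞) (g - 1) ω) ∂ν := by
    refine integral_congr_ae ?_
    filter_upwards [E.ae_cond_mem (E.measurableSet_cell (g : ℕ∞) 1)] with ω hω
    show E.Yobs t ω - E.Yobs (g - 1) ω = _
    rw [E.Yobs_eq_on_cell1 _ t ω hω, E.Yobs_eq_on_cell1 _ (g - 1) ω hω]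
  have hNAswap : ∫ ω, E.Ypo (g : ℕ∞) (g - 1) ω ∂ν = ∫ ω, E.Ypo ⊤ (g - 1) ω ∂ν := by
    have h := hNA g hg (g - 1) (by omega) (by omega)
    calc ∫ ω, E.Ypo (g : ℕ∞) (g - 1) ω ∂ν
        = ∫ ω, (ν[E.Ypo (g : ℕ∞) (g - 1)|E.mX]) ω ∂ν := (integral_condExp E.hmX).symm
      _ = ∫ ω, (ν[E.Ypo ⊤ (g - 1)|E.mX]) ω ∂ν :=
          integral_congr_ae (cond_absolutelyContinuous.ae_le h)
      _ = ∫ ω, E.Ypo ⊤ (g - 1) ω ∂ν := integral_condExp E.hmX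
  have hATT : E.ATT g t = (∫ ω, E.Ypo (g : ℕ∞) t ω ∂ν) - ∫ ω, E.Ypo ⊤ t ω ∂ν := by
    rw [Setup.ATT]
    exact integral_sub hiYg_t hiYtop_t
  have hΔν : ∫ ω, (E.Yobs t ω - E.Yobs (g - 1) ω) ∂ν
      = E.ATT g t + ∫ ω, (E.Ypo ⊤ t ω - E.Ypo ⊤ (g - 1) ω) ∂ν := by
    rw [hstep, integral_sub hiYg_t hiYg_g1, hNAswap, hATT,
      integral_sub hiYtop_t hiYtop_g1]
    ring
  have hB1 : ∫ ω, (E.Ypo ⊤ t ω - E.Ypo ⊤ (g - 1) ω) ∂ν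
      = ∫ ω, ((E.μ[|E.cell (g : ℕ∞) 1])[fun ω' => E.Ypo ⊤ t ω' - E.Ypo ⊤ (g - 1) ω'|E.mX]) ω ∂ν :=
    (integral_condExp E.hmX).symm
  -- parallel trends
  have hPTc := E.pt_comb hPT hg hg2 hgt htT hgc hgct hε hbd1 hbd0 hbdc1 hbdc0
  have hBint : ∀ (g'' : ℕ∞) (q'' : ℕ), (∀ᵐ ω ∂E.μ, ε < E.pX g'' q'' ω) →
      Integrable ((E.μ[|E.cell g'' q''])[fun ω' => E.Ypo ⊤ t ω' - E.Ypo ⊤ (g - 1) ω'|E.mX]) ν :=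
    fun g'' q'' hbd => E.integrable_cond
      (E.integrable_of_cond stronglyMeasurable_condExp hε hbd integrable_condExp) hc10
  have hPTν :
      (∫ ω, ((E.μ[|E.cell (g : ℕ∞) 1])[fun ω' => E.Ypo ⊤ t ω' - E.Ypo ⊤ (g - 1) ω'|E.mX]) ω ∂ν)
        - (∫ ω, ((E.μ[|E.cell (g : ℕ∞) 0])[fun ω' => E.Ypo ⊤ t ω' - E.Ypo ⊤ (g - 1) ω'|E.mX]) ω ∂ν)
      = (∫ ω, ((E.μ[|E.cell gc 1])[fun ω' => E.Ypo ⊤ t ω' - E.Ypo ⊤ (g - 1) ω'|E.mX]) ω ∂ν)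
        - ∫ ω, ((E.μ[|E.cell gc 0])[fun ω' => E.Ypo ⊤ t ω' - E.Ypo ⊤ (g - 1) ω'|E.mX]) ω ∂ν := by
    rw [← integral_sub (hBint _ _ hbd1) (hBint _ _ hbd0),
      ← integral_sub (hBint _ _ hbdc1) (hBint _ _ hbdc0)]
    exact integral_congr_ae (cond_absolutelyContinuous.ae_le hPTc)
  rw [hsplit1, hsplit2, hA1, hA2, hA3, hA4, hI2, hI3, hI4, hΔν]
  linarith [hPTν, hB1]
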